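/- arXiv:2006.15925 — 4 statements merged into one kernel-verified Lean document; each statement's English description precedes it below -/
import Mathlib

section
/- Let M be a real 3×3 matrix and let S = (1/2)·MᵀM. Then there exists an orthogonal matrix P ∈ O(3) such that MP is symmetric and trace-free if and only if tr(S)² = 2·tr(S²). -/
open Matrix
open scoped RealInnerProductSpace

section Gram
variable {n : Type*} [Fintype n] [DecidableEq n]

omit [DecidableEq n] in
private lemma dot_aux (B : Matrix n n ℝ) (v w : n → ℝ) :
    (Bᵀ *ᵥ v) ⬝ᵥ (Bᵀ *ᵥ w) = v ⬝ᵥ ((B * Bᵀ) *ᵥ w) := by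
  rw [mulVec_transpose, dotProduct_mulVec, ← mulVec_mulVec, dotProduct_mulVec,
    dotProduct_mulVec]

private lemma gram_lemma (B C : Matrix n n ℝ) (h : B * Bᵀ = C * Cᵀ) :
    ∃ P : Matrix n n ℝ, P * Pᵀ = 1 ∧ B * P = C := by
  classical
  set f : EuclideanSpace ℝ n →ₗ[ℝ] EuclideanSpace ℝ n := toEuclideanLin Bᵀ with hf
  set g : EuclideanSpace ℝ n →ₗ[ℝ] EuclideanSpace ℝ n := toEuclideanLin Cᵀ with hg
  have key : ∀ x y : EuclideanSpace ℝ n, ⟪f x, f y⟫ = ⟪g x, g y⟫ := by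
    intro x y
    simp only [hf, hg, toEuclideanLin_apply, PiLp.inner_apply, RCLike.inner_apply, conj_trivial]
    have h1 := dot_aux B ((WithLp.equiv 2 (n → ℝ)) y) ((WithLp.equiv 2 (n → ℝ)) x)
    have h2 := dot_aux C ((WithLp.equiv 2 (n → ℝ)) y) ((WithLp.equiv 2 (n → ℝ)) x)
    rw [h] at h1
    simpa [dotProduct] using h1.trans h2.symm
  have hker : LinearMap.ker f ≤ LinearMap.ker g := by
    intro x hx
    rw [LinearMap.mem_ker] at hx ⊢
    have := key x x
    rw [hx, inner_zero_left] at this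
    exact inner_self_eq_zero.mp this.symm
  let L0 : ↥(LinearMap.range f) →ₗ[ℝ] EuclideanSpace ℝ n :=
    ((LinearMap.ker f).liftQ g hker).comp
      (f.quotKerEquivRange.symm : ↥(LinearMap.range f) →ₗ[ℝ] _)
  have hL0 : ∀ x : EuclideanSpace ℝ n,
      L0 ⟨f x, LinearMap.mem_range_self f x⟩ = g x := by
    intro x
    have h1 : f.quotKerEquivRange (Submodule.Quotient.mk x)
        = ⟨f x, LinearMap.mem_range_self f x⟩ :=
      Subtype.ext (f.quotKerEquivRange_apply_mk x)
    have h2 : f.quotKerEquivRange.symm ⟨f x, LinearMap.mem_range_self f x⟩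
        = Submodule.Quotient.mk x := by
      rw [← h1, LinearEquiv.symm_apply_apply]
    simp only [L0, LinearMap.comp_apply, LinearEquiv.coe_coe, h2, Submodule.liftQ_apply]
  have hnorm : ∀ s : ↥(LinearMap.range f), ‖L0 s‖ = ‖s‖ := by
    rintro ⟨s, x, rfl⟩
    rw [hL0 x]
    have h1 : ⟪g x, g x⟫ = ⟪f x, f x⟫ := (key x x).symm
    rw [real_inner_self_eq_norm_sq, real_inner_self_eq_norm_sq] at h1
    have : ‖(⟨f x, LinearMap.mem_range_self f x⟩ : ↥(LinearMap.range f))‖ = ‖f x‖ := rfl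
    rw [this]
    nlinarith [norm_nonneg (g x), norm_nonneg (f x)]
  let L : ↥(LinearMap.range f) →ₗᵢ[ℝ] EuclideanSpace ℝ n := ⟨L0, hnorm⟩
  let F := L.extend
  have hF : ∀ x : EuclideanSpace ℝ n, F (f x) = g x := by
    intro x
    exact (L.extend_apply ⟨f x, LinearMap.mem_range_self f x⟩).trans (hL0 x)
  set Q : Matrix n n ℝ := toEuclideanLin.symm F.toLinearMap with hQdef
  have hQ : ∀ x : EuclideanSpace ℝ n, toEuclideanLin Q x = F x := by
    intro x
    rw [hQdef, LinearEquiv.apply_symm_apply]; rfl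
  have hQmul : ∀ v : n → ℝ, (Q * Bᵀ) *ᵥ v = Cᵀ *ᵥ v := by
    intro v
    have h1 := hF ((WithLp.equiv 2 (n → ℝ)).symm v)
    rw [← hQ] at h1
    have := congrArg (WithLp.equiv 2 (n → ℝ)) h1
    simpa [hf, hg, toEuclideanLin_apply, mulVec_mulVec] using this
  have hQB : Q * Bᵀ = Cᵀ := by
    ext i j
    have := congrFun (hQmul (Pi.single j 1)) i
    simpa [mulVec_single] using this
  have hinner : ∀ v w : n → ℝ, (Q *ᵥ v) ⬝ᵥ (Q *ᵥ w) = v ⬝ᵥ w := by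
    intro v w
    have := F.inner_map_map ((WithLp.equiv 2 (n → ℝ)).symm w) ((WithLp.equiv 2 (n → ℝ)).symm v)
    rw [← hQ, ← hQ] at this
    simpa [toEuclideanLin_apply, PiLp.inner_apply, dotProduct] using this
  have hQorth : Qᵀ * Q = 1 := by
    ext i j
    have h1 := hinner (Pi.single i 1) (Pi.single j 1)
    have h2 : (Q *ᵥ Pi.single i 1) ⬝ᵥ (Q *ᵥ Pi.single j 1)
        = (Pi.single i 1 : n → ℝ) ⬝ᵥ ((Qᵀ * Q) *ᵥ Pi.single j 1) := by
      rw [← mulVec_mulVec, dotProduct_mulVec, dotProduct_mulVec, dotProduct_mulVec,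
        ← transpose_transpose Q, mulVec_transpose, transpose_transpose]
    have h3 := h2.symm.trans h1
    simpa [dotProduct_single, single_dotProduct, mulVec_single, one_apply]
      using h3.trans (by simp [Pi.single_apply, eq_comm])
  refine ⟨Qᵀ, by rw [transpose_transpose]; exact hQorth, ?_⟩
  have : B * Qᵀ = (Q * Bᵀ)ᵀ := by rw [transpose_mul, transpose_transpose]
  rw [this, hQB, transpose_transpose]

end Gram

private lemma trace_sq_id (A : Matrix (Fin 3) (Fin 3) ℝ) (h : A.trace = 0) :
    (A * A).trace ^ 2 = 2 * ((A * A) * (A * A)).trace := by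
  simp only [trace_fin_three, mul_apply, Fin.sum_univ_three] at h ⊢
  generalize A 0 0 = a00 at h ⊢
  generalize A 0 1 = a01 at h ⊢
  generalize A 0 2 = a02 at h ⊢
  generalize A 1 0 = a10 at h ⊢
  generalize A 1 1 = a11 at h ⊢
  generalize A 1 2 = a12 at h ⊢
  generalize A 2 0 = a20 at h ⊢
  generalize A 2 1 = a21 at h ⊢
  generalize A 2 2 = a22 at h ⊢
  have : a22 = -(a00 + a11) := by linarith
  subst this
  ring

private lemma signs_lemma (d : Fin 3 → ℝ) (hd : ∀ i, 0 ≤ d i)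
    (h : (d 0 + d 1 + d 2) ^ 2 = 2 * ((d 0) ^ 2 + (d 1) ^ 2 + (d 2) ^ 2)) :
    ∃ e : Fin 3 → ℝ, (∀ i, e i ^ 2 = d i) ∧ e 0 + e 1 + e 2 = 0 := by
  set s0 := Real.sqrt (d 0) with hs0def
  set s1 := Real.sqrt (d 1) with hs1def
  set s2 := Real.sqrt (d 2) with hs2def
  have hs0 : s0 ^ 2 = d 0 := Real.sq_sqrt (hd 0)
  have hs1 : s1 ^ 2 = d 1 := Real.sq_sqrt (hd 1)
  have hs2 : s2 ^ 2 = d 2 := Real.sq_sqrt (hd 2)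
  have hs0n : 0 ≤ s0 := Real.sqrt_nonneg _
  have hs1n : 0 ≤ s1 := Real.sqrt_nonneg _
  have hs2n : 0 ≤ s2 := Real.sqrt_nonneg _
  rw [← hs0, ← hs1, ← hs2] at h
  have hfac : (s0 + s1 + s2) * (-s0 + s1 + s2) * (s0 - s1 + s2) * (s0 + s1 - s2) = 0 := by
    linear_combination h
  rcases mul_eq_zero.mp hfac with hf | hf4
  · rcases mul_eq_zero.mp hf with hf | hf3
    · rcases mul_eq_zero.mp hf with hf1 | hf2
      · exact ⟨![-s0, s1, s2], by
          intro i; fin_cases i <;> simp [hs0, hs1, hs2, neg_pow], by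
          simp; linarith⟩
      · exact ⟨![-s0, s1, s2], by
          intro i; fin_cases i <;> simp [hs0, hs1, hs2, neg_pow], by
          simp; linarith⟩
    · exact ⟨![s0, -s1, s2], by
        intro i; fin_cases i <;> simp [hs0, hs1, hs2, neg_pow], by
        simp; linarith⟩
  · exact ⟨![s0, s1, -s2], by
      intro i; fin_cases i <;> simp [hs0, hs1, hs2, neg_pow], by
      simp; linarith⟩

/-- For a real 3×3 matrix `M` and `S = (1/2)·MᵀM`, there exists `P ∈ O(3)` with
`MP` symmetric and trace-free iff `tr(S)² = 2·tr(S²)`. -/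
theorem stmt0 (M : Matrix (Fin 3) (Fin 3) ℝ) (S : Matrix (Fin 3) (Fin 3) ℝ)
    (hS : S = (1 / 2 : ℝ) • (Mᵀ * M)) :
    (∃ P : Matrix (Fin 3) (Fin 3) ℝ, P * Pᵀ = 1 ∧ (M * P)ᵀ = M * P ∧ (M * P).trace = 0) ↔
      S.trace ^ 2 = 2 * (S * S).trace := by
  constructor
  · rintro ⟨P, hP, hsym, htr⟩
    set A := M * P with hA
    have hPt : Pᵀ * P = 1 := mul_eq_one_comm.mp hP
    have hM : M = A * Pᵀ := by
      rw [hA, mul_assoc, hP, mul_one]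
    have hMtM : Mᵀ * M = P * (A * A) * Pᵀ := by
      conv_lhs => rw [hM]
      rw [transpose_mul, transpose_transpose]
      calc Pᵀᵀ * Aᵀ * (A * Pᵀ) = P * Aᵀ * A * Pᵀ := by
            rw [transpose_transpose]; noncomm_ring
        _ = P * (A * A) * Pᵀ := by rw [hsym]; noncomm_ring
    have htrS : S.trace = (1 / 2 : ℝ) * (A * A).trace := by
      rw [hS, trace_smul, hMtM, smul_eq_mul]
      congr 1
      rw [trace_mul_cycle, ← mul_assoc, hPt, one_mul]
    have htrS2 : (S * S).trace = (1 / 4 : ℝ) * ((A * A) * (A * A)).trace := by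
      rw [hS, smul_mul_smul_comm, hMtM]
      rw [trace_smul, smul_eq_mul]
      have : P * (A * A) * Pᵀ * (P * (A * A) * Pᵀ) = P * ((A * A) * (A * A)) * Pᵀ := by
        calc P * (A * A) * Pᵀ * (P * (A * A) * Pᵀ)
            = P * (A * A) * (Pᵀ * P) * (A * A) * Pᵀ := by noncomm_ring
          _ = P * ((A * A) * (A * A)) * Pᵀ := by rw [hPt]; noncomm_ring
      rw [this, trace_mul_cycle, ← mul_assoc, hPt, one_mul]
      norm_num
    rw [htrS, htrS2]
    have := trace_sq_id A htr
    nlinarith [this]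
  · intro h
    set N := M * Mᵀ with hNdef
    have hN : N.IsHermitian := by
      have := isHermitian_mul_conjTranspose_self M
      simpa [conjTranspose_eq_transpose_of_trivial] using this
    set d := hN.eigenvalues with hd
    have hdn : ∀ i, 0 ≤ d i := by
      intro i
      have : N.PosSemidef := by
        have := posSemidef_self_mul_conjTranspose M
        simpa [conjTranspose_eq_transpose_of_trivial] using this
      exact this.eigenvalues_nonneg i
    set U : Matrix (Fin 3) (Fin 3) ℝ := (hN.eigenvectorUnitary : Matrix (Fin 3) (Fin 3) ℝ)
      with hUdef
    have hsU : star U = Uᵀ := conjTranspose_eq_transpose_of_trivial U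
    have hUU : Uᵀ * U = 1 := by
      rw [← hsU]; exact mem_unitaryGroup_iff'.mp (hN.eigenvectorUnitary).2
    have hUUt : U * Uᵀ = 1 := by
      rw [← hsU]; exact mem_unitaryGroup_iff.mp (hN.eigenvectorUnitary).2
    have hspec : N = U * diagonal d * Uᵀ := by
      have := hN.spectral_theorem
      rw [Unitary.conjStarAlgAut_apply] at this
      rw [hsU] at this
      simpa [RCLike.ofReal_real_eq_id] using this
    have htrN : N.trace = d 0 + d 1 + d 2 := by
      rw [hspec, trace_mul_cycle, hUU, one_mul, trace_diagonal,
        Fin.sum_univ_three]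
    have htrN2 : (N * N).trace = d 0 ^ 2 + d 1 ^ 2 + d 2 ^ 2 := by
      have hNN : N * N = U * (diagonal d * diagonal d) * Uᵀ := by
        calc N * N = U * diagonal d * (Uᵀ * U) * diagonal d * Uᵀ := by
              rw [hspec]; noncomm_ring
          _ = U * (diagonal d * diagonal d) * Uᵀ := by rw [hUU]; noncomm_ring
      rw [hNN, trace_mul_cycle, hUU, one_mul, diagonal_mul_diagonal,
        trace_diagonal, Fin.sum_univ_three]
      ring
    -- translate hypothesis into eigenvalue identity
    have htrS : S.trace = (1 / 2 : ℝ) * N.trace := by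
      rw [hS, trace_smul, smul_eq_mul, hNdef, trace_mul_comm]
    have htrS2 : (S * S).trace = (1 / 4 : ℝ) * (N * N).trace := by
      rw [hS, smul_mul_smul_comm, trace_smul, smul_eq_mul]
      have : (Mᵀ * M * (Mᵀ * M)).trace = (N * N).trace := by
        rw [hNdef]
        calc (Mᵀ * M * (Mᵀ * M)).trace = (Mᵀ * (M * Mᵀ * M)).trace := by noncomm_ring
          _ = (M * Mᵀ * M * Mᵀ).trace := by rw [trace_mul_comm, mul_assoc]
          _ = (M * Mᵀ * (M * Mᵀ)).trace := by noncomm_ring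
      rw [this]
      norm_num
    rw [htrS, htrS2, htrN, htrN2] at h
    have hdid : (d 0 + d 1 + d 2) ^ 2 = 2 * (d 0 ^ 2 + d 1 ^ 2 + d 2 ^ 2) := by nlinarith [h]
    obtain ⟨e, he, hesum⟩ := signs_lemma d hdn hdid
    set A := U * diagonal e * Uᵀ with hAdef
    have hAsym : Aᵀ = A := by
      rw [hAdef, transpose_mul, transpose_mul, transpose_transpose, diagonal_transpose,
        mul_assoc]
    have hAtr : A.trace = 0 := by
      rw [hAdef, trace_mul_cycle, hUU, one_mul, trace_diagonal,
        Fin.sum_univ_three, hesum]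
    have hAA : A * A = N := by
      calc A * A = U * diagonal e * (Uᵀ * U) * diagonal e * Uᵀ := by
            rw [hAdef]; noncomm_ring
        _ = U * (diagonal e * diagonal e) * Uᵀ := by rw [hUU]; noncomm_ring
        _ = U * diagonal d * Uᵀ := by
            rw [diagonal_mul_diagonal]
            have hee : (fun i => e i * e i) = d := funext fun i => by rw [← he i]; ring
            rw [hee]
        _ = N := hspec.symm
    obtain ⟨P, hP, hMP⟩ := gram_lemma M A (by rw [hNdef.symm, ← hAA, hAsym])
    exact ⟨P, hP, by rw [hMP]; exact hAsym, by rw [hMP]; exact hAtr⟩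
end

section
/- Let A be a real 6×6 skew-symmetric matrix and J a real 6×6 matrix with J² = −I, Jᵀ = −J, such that JA = AJ and tr(JA) = 0. Then tr(A²)² = 4·tr(A⁴). -/
open Matrix

open Complex

private lemma sum3_identity (d : Fin 6 → ℝ) (s : Finset (Fin 6)) (hcard : s.card ≤ 3)
    (hsum : ∑ i ∈ s, d i = 0) :
    (∑ i ∈ s, d i ^ 2) ^ 2 = 2 * ∑ i ∈ s, d i ^ 4 := by
  interval_cases h : s.card
  · rw [Finset.card_eq_zero.mp h]; simp
  · obtain ⟨a, rfl⟩ := Finset.card_eq_one.mp h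
    simp_all
  · obtain ⟨a, b, hab, rfl⟩ := Finset.card_eq_two.mp h
    have h1 : a ∉ ({b} : Finset (Fin 6)) := by simp [hab]
    simp only [Finset.sum_insert h1, Finset.sum_singleton] at hsum ⊢
    have hb : d b = -d a := by linarith
    rw [hb]; ring
  · obtain ⟨a, b, c, hab, hac, hbc, rfl⟩ := Finset.card_eq_three.mp h
    have h1 : a ∉ ({b, c} : Finset (Fin 6)) := by simp [hab, hac]
    have h2 : b ∉ ({c} : Finset (Fin 6)) := by simp [hbc]
    simp only [Finset.sum_insert h1, Finset.sum_insert h2, Finset.sum_singleton] at hsum ⊢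
    have hc : d c = -d a - d b := by linarith
    rw [hc]; ring


/-- If `A` is real 6×6 skew-symmetric, `J` is an orthogonal complex structure
(`J² = −I`, `Jᵀ = −J`) commuting with `A`, and `tr(JA) = 0`, then
`tr(A²)² = 4·tr(A⁴)`. -/
theorem stmt4 (A J : Matrix (Fin 6) (Fin 6) ℝ)
    (hskew : Aᵀ = -A) (hJ2 : J * J = -1) (hJt : Jᵀ = -J)
    (hcomm : J * A = A * J) (htr : (J * A).trace = 0) :
    (A * A).trace ^ 2 = 4 * (A * A * A * A).trace := by
  have htr0 : ∀ X : Matrix (Fin 6) (Fin 6) ℝ, Xᵀ = -X → X.trace = 0 := by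
    intro X hX
    have h1 : Xᵀ.trace = X.trace := trace_transpose X
    rw [hX, trace_neg] at h1
    linarith
  set S : Matrix (Fin 6) (Fin 6) ℝ := J * A with hS
  have hJA : J * A = A * J := by rw [← hS]; exact hcomm
  have hScomm : J * S = S * J := by
    calc J * S = J * (A * J) := by rw [hcomm]
    _ = (J * A) * J := by rw [mul_assoc]
    _ = S * J := by rw [← hS]
  have hSsym : Sᵀ = S := by
    rw [hS, transpose_mul, hskew, hJt, neg_mul_neg, ← hJA]
  have hS2 : S * S = -(A * A) := by
    rw [hS]
    calc J * A * (J * A) = J * (A * J) * A := by noncomm_ring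
    _ = J * (J * A) * A := by rw [hJA]
    _ = (J * J) * (A * A) := by noncomm_ring
    _ = -(A * A) := by rw [hJ2]; noncomm_ring
  have hS4 : S * S * (S * S) = A * A * A * A := by rw [hS2]; noncomm_ring
  have hJS2comm : J * (S * S) = (S * S) * J := by
    rw [← mul_assoc, hScomm, mul_assoc, hScomm, ← mul_assoc]
  have hJS4comm : J * (S * S * (S * S)) = (S * S * (S * S)) * J := by
    rw [← mul_assoc, hJS2comm, mul_assoc, hJS2comm, ← mul_assoc]
  -- key real traces
  have htrA : A.trace = 0 := htr0 A hskew
  have hSSt : (S * S)ᵀ = S * S := by rw [transpose_mul, hSsym]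
  have htrJS2 : (J * (S * S)).trace = 0 := by
    apply htr0
    rw [transpose_mul, hSSt, hJt, mul_neg, ← hJS2comm]
  have htrJS4 : (J * (S * S * (S * S))).trace = 0 := by
    apply htr0
    have h4t : (S * S * (S * S))ᵀ = S * S * (S * S) := by
      rw [transpose_mul, hSSt]
    rw [transpose_mul, h4t, hJt, mul_neg, ← hJS4comm]
  have htrJS : (J * S).trace = 0 := by
    have : J * S = -A := by rw [hS, ← mul_assoc, hJ2]; noncomm_ring
    rw [this, trace_neg, htrA, neg_zero]
  -- complexification
  set φ : Matrix (Fin 6) (Fin 6) ℝ →+* Matrix (Fin 6) (Fin 6) ℂ :=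
    Complex.ofRealHom.mapMatrix with hφ
  have htrφ : ∀ X : Matrix (Fin 6) (Fin 6) ℝ, (φ X).trace = (X.trace : ℂ) := by
    intro X
    simp [hφ, Matrix.trace, Matrix.diag, Matrix.map_apply, RingHom.mapMatrix_apply]
  have htransφ : ∀ X : Matrix (Fin 6) (Fin 6) ℝ, (φ X)ᵀ = φ Xᵀ := by
    intro X; ext i j
    simp [hφ, RingHom.mapMatrix_apply, Matrix.map_apply]
  have hctφ : ∀ X : Matrix (Fin 6) (Fin 6) ℝ, (φ X)ᴴ = φ Xᵀ := by
    intro X; ext i j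
    simp [hφ, Matrix.conjTranspose_apply, Matrix.map_apply, RingHom.mapMatrix_apply]
  set J' : Matrix (Fin 6) (Fin 6) ℂ := φ J with hJ'
  set S' : Matrix (Fin 6) (Fin 6) ℂ := φ S with hS'
  have hJ'2 : J' * J' = -1 := by
    rw [hJ', ← _root_.map_mul, hJ2]; simp
  have hJ'S' : J' * S' = S' * J' := by
    rw [hJ', hS', ← _root_.map_mul, ← _root_.map_mul, hScomm]
  have hJ't : J'ᵀ = -J' := by rw [hJ', htransφ, hJt, map_neg]
  have hJ'h : J'ᴴ = -J' := by rw [hJ', hctφ, hJt, map_neg]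
  have hS'h : S'ᴴ = S' := by rw [hS', hctφ, hSsym]
  set X : Matrix (Fin 6) (Fin 6) ℂ := 1 - Complex.I • J' with hX
  have hII : (Complex.I • J') * (Complex.I • J') = 1 := by
    rw [smul_mul_assoc, mul_smul_comm, smul_smul, hJ'2, Complex.I_mul_I]
    simp
  have hXX : X * X = (2 : ℂ) • X := by
    rw [hX, mul_sub, sub_mul, sub_mul]
    simp only [one_mul, mul_one]
    rw [hII, two_smul]
    abel
  have hXXt : X * Xᵀ = 0 := by
    have hXt : Xᵀ = 1 + Complex.I • J' := by
      rw [hX, transpose_sub, transpose_one, transpose_smul, hJ't, smul_neg, sub_neg_eq_add]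
    rw [hX, hXt, sub_mul, mul_add, mul_add]
    simp only [one_mul, mul_one]
    rw [hII]
    abel
  have hXh : Xᴴ = X := by
    rw [hX, conjTranspose_sub, conjTranspose_one, conjTranspose_smul, hJ'h]
    simp
  have hXS' : X * S' = S' * X := by
    rw [hX, sub_mul, mul_sub, one_mul, mul_one, smul_mul_assoc, mul_smul_comm, hJ'S']
  set P : Matrix (Fin 6) (Fin 6) ℂ := (2 : ℂ)⁻¹ • X with hP
  have hP2 : P * P = P := by
    rw [hP, smul_mul_assoc, mul_smul_comm, smul_smul, hXX, smul_smul]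
    norm_num
  have hPh : Pᴴ = P := by
    rw [hP, conjTranspose_smul, hXh]
    norm_num
  have hPS' : P * S' = S' * P := by
    rw [hP, smul_mul_assoc, mul_smul_comm, hXS']
  have hPrank : P.rank ≤ 3 := by
    have h0 : P * Pᵀ = 0 := by
      rw [hP, transpose_smul, smul_mul_assoc, mul_smul_comm, hXXt, smul_zero, smul_zero]
    have h1 := Matrix.rank_add_rank_le_card_of_mul_eq_zero h0
    rw [Matrix.rank_transpose] at h1
    simp only [Fintype.card_fin] at h1
    omega
  -- the Hermitian matrix M = P * S'
  set M : Matrix (Fin 6) (Fin 6) ℂ := P * S' with hM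
  have hMh : M.IsHermitian := by
    show Mᴴ = M
    rw [hM, conjTranspose_mul, hS'h, hPh, ← hPS']
  have hMpow : ∀ k : ℕ, M ^ (k + 1) = P * S' ^ (k + 1) := by
    intro k
    have hc : Commute P S' := hPS'
    rw [hM, hc.mul_pow, IsIdempotentElem.pow_succ_eq k hP2]
  have htrP : ∀ Y : Matrix (Fin 6) (Fin 6) ℝ,
      (P * φ Y).trace = (2:ℂ)⁻¹ * ((Y.trace : ℂ) - Complex.I * ((J * Y).trace : ℂ)) := by
    intro Y
    rw [hP, smul_mul_assoc, trace_smul, hX, sub_mul, one_mul, smul_mul_assoc, trace_sub,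
      trace_smul, hJ', ← _root_.map_mul, htrφ, htrφ]
    simp [smul_eq_mul]
  have hMtr1 : M.trace = 0 := by
    rw [hM, hS', htrP S, htr, htrJS]
    simp
  have hS'2 : S' ^ 2 = φ (S * S) := by rw [pow_two, hS', ← _root_.map_mul]
  have hS'4 : S' ^ 4 = φ (S * S * (S * S)) := by
    rw [show (4:ℕ) = 2 + 2 from rfl, pow_add, hS'2, ← _root_.map_mul]
  have hMtr2 : (M ^ 2).trace = -(((A * A).trace : ℂ)) / 2 := by
    rw [show (2:ℕ) = 1 + 1 from rfl, hMpow, ← show (2:ℕ) = 1 + 1 from rfl, hS'2, htrP,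
      htrJS2, hS2, trace_neg]
    push_cast
    ring
  have hMtr4 : (M ^ 4).trace = ((A * A * A * A).trace : ℂ) / 2 := by
    rw [show (4:ℕ) = 3 + 1 from rfl, hMpow, ← show (4:ℕ) = 3 + 1 from rfl, hS'4, htrP,
      htrJS4, hS4]
    push_cast
    ring
  -- eigenvalues
  set U : Matrix (Fin 6) (Fin 6) ℂ := (hMh.eigenvectorUnitary : Matrix (Fin 6) (Fin 6) ℂ)
    with hU
  set d : Fin 6 → ℝ := hMh.eigenvalues with hd
  have hU1 : star U * U = 1 := by
    rw [hU]
    exact Matrix.mem_unitaryGroup_iff'.mp hMh.eigenvectorUnitary.2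
  have hU2 : U * star U = 1 := by
    rw [hU]
    exact Matrix.mem_unitaryGroup_iff.mp hMh.eigenvectorUnitary.2
  have hspec : M = U * diagonal (Complex.ofReal ∘ d) * star U := by
    rw [hU, hd]
    exact hMh.spectral_theorem
  have hdiag : ∀ k : ℕ,
      M ^ k = U * (diagonal (Complex.ofReal ∘ d)) ^ k * star U := by
    intro k
    induction k with
    | zero => rw [pow_zero, pow_zero, mul_one, hU2]
    | succ k ih =>
      rw [pow_succ, ih]
      conv_lhs => rw [hspec]
      rw [pow_succ]
      simp only [mul_assoc]
      rw [← mul_assoc (star U) U, hU1, one_mul]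
  have htrMk : ∀ k : ℕ, (M ^ k).trace = ∑ i, ((d i : ℂ)) ^ k := by
    intro k
    rw [hdiag k, trace_mul_cycle, hU1, one_mul, diagonal_pow, trace_diagonal]
    simp [Pi.pow_apply]
  have e1 : ∑ i, d i = 0 := by
    have h := htrMk 1
    rw [pow_one, hMtr1] at h
    simp only [pow_one] at h
    exact_mod_cast h.symm
  have e2 : ∑ i, d i ^ 2 = -((A * A).trace) / 2 := by
    have h := htrMk 2
    rw [hMtr2] at h
    have : ((∑ i, d i ^ 2 : ℝ) : ℂ) = ((-((A * A).trace) / 2 : ℝ) : ℂ) := by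
      push_cast
      rw [← h]
    exact_mod_cast this
  have e4 : ∑ i, d i ^ 4 = (A * A * A * A).trace / 2 := by
    have h := htrMk 4
    rw [hMtr4] at h
    have : ((∑ i, d i ^ 4 : ℝ) : ℂ) = (((A * A * A * A).trace / 2 : ℝ) : ℂ) := by
      push_cast
      rw [← h]
    exact_mod_cast this
  -- rank bound
  have hrank : M.rank ≤ 3 := le_trans (by rw [hM]; exact Matrix.rank_mul_le_left P S') hPrank
  have hcard : Fintype.card {i // d i ≠ 0} ≤ 3 := by
    rw [hd, ← hMh.rank_eq_card_non_zero_eigs]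
    exact hrank
  classical
  set s : Finset (Fin 6) := Finset.univ.filter (fun i => d i ≠ 0) with hsdef
  have hs3 : s.card ≤ 3 := by
    rw [hsdef, ← Fintype.card_subtype]
    exact hcard
  have hsum1 : ∑ i ∈ s, d i = ∑ i, d i := Finset.sum_filter_ne_zero _
  have hzero : ∀ x ∈ Finset.univ, x ∉ s → ∀ m : ℕ, d x ^ (m + 1) = 0 := by
    intro x _ hx m
    rw [hsdef] at hx
    simp only [Finset.mem_filter, Finset.mem_univ, true_and, not_not] at hx
    rw [hx]
    simp
  have hsum2 : ∑ i ∈ s, d i ^ 2 = ∑ i, d i ^ 2 := by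
    apply Finset.sum_subset (Finset.filter_subset _ _)
    intro x hx1 hx2
    simpa using hzero x hx1 hx2 1
  have hsum4 : ∑ i ∈ s, d i ^ 4 = ∑ i, d i ^ 4 := by
    apply Finset.sum_subset (Finset.filter_subset _ _)
    intro x hx1 hx2
    simpa using hzero x hx1 hx2 3
  have key := sum3_identity d s hs3 (by rw [hsum1, e1])
  rw [hsum2, hsum4, e2, e4] at key
  nlinarith [key]
end

section
/- Let g be the inner product on ℝ⁶ = span(f₁,…,f₆) making the basis {f₁/r, f₂, f₃/s, f₄, f₅/t, f₆} orthonormal for 0 < r ≤ s ≤ t, and let A be the skew-symmetric (with respect to g) endomorphism corresponding to the 2-form f¹∧f² + f³∧f⁴ + f⁵∧f⁶ via g. Then tr(A⁴) − (1/4)·tr(A²)² = (1/r + 1/s + 1/t)(1/r + 1/s − 1/t)(1/r − 1/s + 1/t)(1/r − 1/s − 1/t), and this vanishes if and only if 1/r = 1/s + 1/t. -/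
open Matrix
set_option maxHeartbeats 1000000

@[simp] lemma cons_val_five'' {α : Type*} {m : ℕ} (x : α)
    (u : Fin m.succ.succ.succ.succ.succ → α) :
    Matrix.vecCons x u 5 =
      Matrix.vecHead (Matrix.vecTail (Matrix.vecTail (Matrix.vecTail (Matrix.vecTail u)))) :=
  rfl

/-- For `0 < r ≤ s ≤ t` and the skew-symmetric (w.r.t. the metric) endomorphism
`A` of `ℝ⁶` corresponding to `f¹∧f² + f³∧f⁴ + f⁵∧f⁶`, one has
`tr(A⁴) − (1/4)tr(A²)² = (1/r+1/s+1/t)(1/r+1/s−1/t)(1/r−1/s+1/t)(1/r−1/s−1/t)`,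
which vanishes iff `1/r = 1/s + 1/t`. -/
theorem stmt13 (r s t : ℝ) (hr : 0 < r) (hrs : r ≤ s) (hst : s ≤ t)
    (A : Matrix (Fin 6) (Fin 6) ℝ)
    (hA : A = !![0, -(1 / r ^ 2), 0, 0, 0, 0;
                 1, 0, 0, 0, 0, 0;
                 0, 0, 0, -(1 / s ^ 2), 0, 0;
                 0, 0, 1, 0, 0, 0;
                 0, 0, 0, 0, 0, -(1 / t ^ 2);
                 0, 0, 0, 0, 1, 0]) :
    (A * A * A * A).trace - (1 / 4) * (A * A).trace ^ 2 =
      (1 / r + 1 / s + 1 / t) * (1 / r + 1 / s - 1 / t) *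
        (1 / r - 1 / s + 1 / t) * (1 / r - 1 / s - 1 / t) ∧
    ((A * A * A * A).trace - (1 / 4) * (A * A).trace ^ 2 = 0 ↔
      1 / r = 1 / s + 1 / t) := by
  have hs : 0 < s := lt_of_lt_of_le hr hrs
  have ht : 0 < t := lt_of_lt_of_le hs hst
  have hB : A * A = Matrix.diagonal ![-(1 / r ^ 2), -(1 / r ^ 2), -(1 / s ^ 2),
      -(1 / s ^ 2), -(1 / t ^ 2), -(1 / t ^ 2)] := by
    subst hA
    ext i j
    fin_cases i <;> fin_cases j <;>
      simp [Matrix.mul_apply, Fin.sum_univ_six, Matrix.diagonal, Matrix.cons_val_two,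
        Matrix.cons_val_three, Matrix.cons_val_four, Matrix.vecHead, Matrix.vecTail]
  have h2 : (A * A).trace = -(1 / r ^ 2) + -(1 / r ^ 2) + -(1 / s ^ 2) +
      -(1 / s ^ 2) + -(1 / t ^ 2) + -(1 / t ^ 2) := by
    rw [hB, Matrix.trace_diagonal, Fin.sum_univ_six]
    simp [Matrix.cons_val_two, Matrix.cons_val_three, Matrix.cons_val_four,
      Matrix.vecHead, Matrix.vecTail]
  have h4 : (A * A * A * A).trace = (1 / r ^ 2) ^ 2 + (1 / r ^ 2) ^ 2 + (1 / s ^ 2) ^ 2 +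
      (1 / s ^ 2) ^ 2 + (1 / t ^ 2) ^ 2 + (1 / t ^ 2) ^ 2 := by
    have : A * A * A * A = (A * A) * (A * A) := by rw [mul_assoc, mul_assoc, ← mul_assoc A A]
    rw [this, hB, Matrix.diagonal_mul_diagonal, Matrix.trace_diagonal, Fin.sum_univ_six]
    simp [Matrix.cons_val_two, Matrix.cons_val_three, Matrix.cons_val_four,
      Matrix.vecHead, Matrix.vecTail]
    ring
  have key : (A * A * A * A).trace - (1 / 4) * (A * A).trace ^ 2 =
      (1 / r + 1 / s + 1 / t) * (1 / r + 1 / s - 1 / t) *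
        (1 / r - 1 / s + 1 / t) * (1 / r - 1 / s - 1 / t) := by
    rw [h2, h4]
    field_simp
    ring
  refine ⟨key, ?_⟩
  rw [key]
  constructor
  · intro h
    have h1 : 0 < 1 / r + 1 / s + 1 / t := by positivity
    have h2 : 0 < 1 / r + 1 / s - 1 / t := by
      have := one_div_le_one_div_of_le hr (hrs.trans hst)
      have hs' : 0 < 1 / s := by positivity
      linarith
    have h3 : 0 < 1 / r - 1 / s + 1 / t := by
      have := one_div_le_one_div_of_le hr hrs
      have ht' : 0 < 1 / t := by positivity
      linarith
    have h4 : 1 / r - 1 / s - 1 / t = 0 := by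
      rcases mul_eq_zero.mp h with h' | h4
      · rcases mul_eq_zero.mp h' with h'' | h3'
        · rcases mul_eq_zero.mp h'' with h1' | h2'
          · linarith
          · linarith
        · linarith
      · exact h4
    linarith
  · intro h
    have : 1 / r - 1 / s - 1 / t = 0 := by linarith
    rw [this, mul_zero]
end

section
/- Let 0 < r ≤ 1 and E, F, G ≥ 0 with EG − F² > 0. Set A₂ = −((√r+1)√(EG−F²))/(2√(Er)), B₂ = −(F(√r+1))/(2√(Er)), B₃ = (1/2)√E. Then A₂·B₂ = 0 and |A₂| = √(B₂² + B₃²) hold if and only if F = 0 and G = E·r/(√r+1)². -/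
/-- Characterization of purely coclosed G₂-structures on `n₆,₂ ⊕ ℝ`:
for `0 < r ≤ 1`, `E, F, G ≥ 0`, `EG − F² > 0`, the system `A₂·B₂ = 0` and
`|A₂| = √(B₂² + B₃²)` holds iff `F = 0` and `G = E·r/(√r+1)²`. -/
theorem stmt19 (r E F G : ℝ) (hr : 0 < r) (hr1 : r ≤ 1)
    (hE : 0 ≤ E) (hF : 0 ≤ F) (hG : 0 ≤ G) (hEG : 0 < E * G - F ^ 2)
    (A₂ B₂ B₃ : ℝ)
    (hA₂ : A₂ = -((Real.sqrt r + 1) * Real.sqrt (E * G - F ^ 2)) /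
      (2 * Real.sqrt (E * r)))
    (hB₂ : B₂ = -(F * (Real.sqrt r + 1)) / (2 * Real.sqrt (E * r)))
    (hB₃ : B₃ = (1 / 2) * Real.sqrt E) :
    (A₂ * B₂ = 0 ∧ |A₂| = Real.sqrt (B₂ ^ 2 + B₃ ^ 2)) ↔
      (F = 0 ∧ G = E * r / (Real.sqrt r + 1) ^ 2) := by
  have hE' : 0 < E := by
    rcases hE.lt_or_eq with h | h
    · exact h
    · exfalso; nlinarith [sq_nonneg F]
  have hs0 : 0 < Real.sqrt r := Real.sqrt_pos.mpr hr
  have hEr : 0 < E * r := mul_pos hE' hr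
  have hd0 : 0 < Real.sqrt (E * r) := Real.sqrt_pos.mpr hEr
  have hd2 : Real.sqrt (E * r) ^ 2 = E * r := Real.sq_sqrt hEr.le
  have hsE2 : Real.sqrt E ^ 2 = E := Real.sq_sqrt hE'.le
  have hX2 : Real.sqrt (E * G - F ^ 2) ^ 2 = E * G - F ^ 2 := Real.sq_sqrt hEG.le
  have hX0 : 0 < Real.sqrt (E * G - F ^ 2) := Real.sqrt_pos.mpr hEG
  have e1 : A₂ ^ 2 = (Real.sqrt r + 1) ^ 2 * (E * G - F ^ 2) / (4 * (E * r)) := by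
    rw [hA₂, div_pow, neg_sq, mul_pow, mul_pow, hX2, hd2]; norm_num
  have e2 : B₂ ^ 2 = F ^ 2 * (Real.sqrt r + 1) ^ 2 / (4 * (E * r)) := by
    rw [hB₂, div_pow, neg_sq, mul_pow, mul_pow, hd2]; norm_num
  have e3 : B₃ ^ 2 = E / 4 := by rw [hB₃, mul_pow, hsE2]; ring
  constructor
  · rintro ⟨h1, h2⟩
    have hA₂0 : A₂ < 0 := by
      rw [hA₂]
      apply div_neg_of_neg_of_pos
      · nlinarith
      · linarith
    have hB₂0 : B₂ = 0 := by
      rcases mul_eq_zero.mp h1 with h | h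
      · exact absurd h hA₂0.ne
      · exact h
    have hF0 : F = 0 := by
      rw [hB₂] at hB₂0
      rcases div_eq_zero_iff.mp hB₂0 with h | h
      · nlinarith
      · linarith
    have hsq : A₂ ^ 2 = B₂ ^ 2 + B₃ ^ 2 := by
      have hnn : (0 : ℝ) ≤ B₂ ^ 2 + B₃ ^ 2 := by positivity
      have := congrArg (· ^ 2) h2
      simpa [sq_abs, Real.sq_sqrt hnn] using this
    refine ⟨hF0, ?_⟩
    rw [e1, e2, e3, hF0] at hsq
    have h1pos : (0 : ℝ) < (Real.sqrt r + 1) ^ 2 := by positivity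
    rw [div_add_div _ _ (by positivity : (4:ℝ)*(E*r) ≠ 0) (by norm_num : (4:ℝ) ≠ 0),
      div_eq_div_iff (by positivity) (by positivity)] at hsq
    rw [eq_div_iff (ne_of_gt h1pos)]
    have key3 : (16 * (E * r) * E) * (G * (Real.sqrt r + 1) ^ 2)
        = (16 * (E * r) * E) * (E * r) := by linear_combination hsq
    exact mul_left_cancel₀ (by positivity : (16 * (E * r) * E) ≠ 0) key3
  · rintro ⟨hF0, hG0⟩
    have hB₂0 : B₂ = 0 := by rw [hB₂, hF0]; simp
    refine ⟨by rw [hB₂0]; ring, ?_⟩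
    have h1pos : (0 : ℝ) < (Real.sqrt r + 1) ^ 2 := by positivity
    have hGval : G * (Real.sqrt r + 1) ^ 2 = E * r := by
      rw [hG0]; exact div_mul_cancel₀ _ (ne_of_gt h1pos)
    have hsq : A₂ ^ 2 = B₂ ^ 2 + B₃ ^ 2 := by
      rw [e1, e2, e3, hF0]
      rw [div_add_div _ _ (by positivity : (4:ℝ)*(E*r) ≠ 0) (by norm_num : (4:ℝ) ≠ 0)]
      rw [div_eq_div_iff (by positivity) (by positivity)]
      linear_combination (16 * E ^ 2 * r) * hGval
    rw [← Real.sqrt_sq_eq_abs, hsq]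
end
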